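/- Let 𝒜 be the torus algebra over 𝔽₂, let P = 𝒜ι₀ be the left ideal generated by ι₀, and let ∂: P → P be right multiplication by ρ₁₂, i.e. ∂(m) = m·ρ₁₂. Then ∂ ∘ ∂ = 0, so (P, ∂) is a differential module over 𝒜; the space of left 𝒜-module endomorphisms of P is 2-dimensional over 𝔽₂, spanned by the identity and right multiplication by ρ₁₂; the differential f ↦ ∂∘f + f∘∂ on this endomorphism space vanishes; and hence the homology of the endomorphism complex of (P, ∂) is 2-dimensional over 𝔽₂, with basis the classes of the identity and of right multiplication by ρ₁₂. -/

import Mathlib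

/-!
The type-D module of the 0-framed solid torus: the left ideal `P = 𝒜ι₀` of the
torus algebra `𝒜`, with differential `∂(m) = m·ρ₁₂` (i.e. `∂x = ρ₁₂·x` on the
generator `x = ι₀`).  Then `∂ ∘ ∂ = 0`; the space of left `𝒜`-module
endomorphisms of `P` is 2-dimensional over `𝔽₂`, spanned by the identity and
`∂` (right multiplication by `ρ₁₂`); the differential `f ↦ ∂∘f + f∘∂` on the
endomorphism space vanishes; hence the homology of the endomorphism complex of
`(P, ∂)` is 2-dimensional over `𝔽₂`, with basis the classes of the identity
and of right multiplication by `ρ₁₂`.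
-/

set_option synthInstance.maxHeartbeats 2000000
set_option maxHeartbeats 4000000

noncomputable section

abbrev F2 := ZMod 2
abbrev Mat4 := Matrix (Fin 4) (Fin 4) F2

namespace Torus

/-! We realize the torus algebra `𝒜` over `𝔽₂` concretely as the subalgebra of
`4×4` matrices over `𝔽₂` spanned by `ι₀ = E₀₀ + E₂₂`, `ι₁ = E₁₁ + E₃₃`,
`ρ₁ = E₀₁`, `ρ₂ = E₁₂`, `ρ₃ = E₂₃`, `ρ₁₂ = E₀₂`, `ρ₂₃ = E₁₃`, `ρ₁₂₃ = E₀₃`.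
These satisfy exactly the defining relations of the torus algebra:
`ι₀, ι₁` are orthogonal idempotents with `ι₀ + ι₁ = 1`; `ρ₁ = ι₀ρ₁ι₁`,
`ρ₂ = ι₁ρ₂ι₀`, `ρ₃ = ι₀ρ₃ι₁`, `ρ₁₂ = ι₀ρ₁₂ι₀`, `ρ₂₃ = ι₁ρ₂₃ι₁`,
`ρ₁₂₃ = ι₀ρ₁₂₃ι₁`; the nonzero products of `ρ`-elements are `ρ₁ρ₂ = ρ₁₂`,
`ρ₂ρ₃ = ρ₂₃`, `ρ₁ρ₂₃ = ρ₁₂₃ = ρ₁₂ρ₃`; and all other products of two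
`ρ`-elements vanish. -/

def i0m : Mat4 := Matrix.single 0 0 1 + Matrix.single 2 2 1
def i1m : Mat4 := Matrix.single 1 1 1 + Matrix.single 3 3 1
def r1m : Mat4 := Matrix.single 0 1 1
def r2m : Mat4 := Matrix.single 1 2 1
def r3m : Mat4 := Matrix.single 2 3 1
def r12m : Mat4 := Matrix.single 0 2 1
def r23m : Mat4 := Matrix.single 1 3 1
def r123m : Mat4 := Matrix.single 0 3 1

/-- The torus algebra `𝒜` over `𝔽₂`. -/
def TA : Subalgebra F2 Mat4 :=
  Algebra.adjoin F2 {i0m, i1m, r1m, r2m, r3m, r12m, r23m, r123m}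

/-- The underlying type of the torus algebra. -/
abbrev A := ↥TA

def ι₀ : A := ⟨i0m, Algebra.subset_adjoin (by simp)⟩
def ι₁ : A := ⟨i1m, Algebra.subset_adjoin (by simp)⟩
def ρ₁ : A := ⟨r1m, Algebra.subset_adjoin (by simp)⟩
def ρ₂ : A := ⟨r2m, Algebra.subset_adjoin (by simp)⟩
def ρ₃ : A := ⟨r3m, Algebra.subset_adjoin (by simp)⟩
def ρ₁₂ : A := ⟨r12m, Algebra.subset_adjoin (by simp)⟩
def ρ₂₃ : A := ⟨r23m, Algebra.subset_adjoin (by simp)⟩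
def ρ₁₂₃ : A := ⟨r123m, Algebra.subset_adjoin (by simp)⟩

/-- The left ideal `𝒜ι₀`. -/
def J0 : Submodule A A := Submodule.span A {ι₀}

/-- The left ideal `𝒜ι₁`. -/
def J1 : Submodule A A := Submodule.span A {ι₁}

lemma mul_mem_J0 (x r : A) (h : r * ι₀ = r) : x * r ∈ J0 :=
  Submodule.mem_span_singleton.mpr ⟨x * r, by rw [smul_eq_mul, mul_assoc, h]⟩

lemma mul_mem_J1 (x r : A) (h : r * ι₁ = r) : x * r ∈ J1 :=
  Submodule.mem_span_singleton.mpr ⟨x * r, by rw [smul_eq_mul, mul_assoc, h]⟩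

/-- Right multiplication by `ρ₁₂`, as a left-`𝒜`-linear endomorphism of `𝒜`. -/
def rmul : A →ₗ[A] A where
  toFun a := a * ρ₁₂
  map_add' a b := add_mul a b ρ₁₂
  map_smul' r a := by simp [smul_eq_mul, mul_assoc]

lemma hrmul : ∀ x ∈ J0, rmul x ∈ J0 := fun x _ =>
  mul_mem_J0 x ρ₁₂ (Subtype.ext (by decide))

/-- The differential `∂ : P → P`, `m ↦ m·ρ₁₂`, on `P = 𝒜ι₀`. -/
def dP : J0 →ₗ[A] J0 := rmul.restrict hrmul

/-! A left-linear endomorphism `f` of `𝒜ι₀` is determined by `f ι₀`, which lies in the corner ring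
`ι₀𝒜ι₀ = 𝔽₂ι₀ ⊕ 𝔽₂ρ₁₂`; hence `f` is one of `0, id, ∂, id + ∂`. All four commute with `∂`, so
`∂f + f∂ = 2∂f = 0` in characteristic `2`, and `∂² = 0` because `ρ₁₂² = 0`. -/

end Torus

section Semiring

variable {R : Type*} [Semiring R]

lemma add_self_eq_zero_of_two_eq_zero {M : Type*} [AddCommMonoid M] [Module R M]
    (h2 : (2 : R) = 0) (x : M) : x + x = 0 := by
  rw [← two_smul R x, h2, zero_smul]

lemma Submodule.linearMap_ext_span_singleton {M N : Type*} [AddCommMonoid M] [Module R M]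
    [AddCommMonoid N] [Module R N] {x : M} {f f' : Submodule.span R {x} →ₗ[R] N}
    (h : f ⟨x, Submodule.mem_span_singleton_self x⟩ = f' ⟨x, Submodule.mem_span_singleton_self x⟩) :
    f = f' := by
  ext ⟨z, hz⟩
  obtain ⟨c, rfl⟩ := Submodule.mem_span_singleton.mp hz
  have hz' : (⟨c • x, hz⟩ : Submodule.span R {x}) = c • ⟨x, Submodule.mem_span_singleton_self x⟩ :=
    rfl
  rw [hz', map_smul, map_smul, h]

lemma IsIdempotentElem.apply_self_eq_mul_mul {e : R} (he : IsIdempotentElem e)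
    (f : Submodule.span R {e} →ₗ[R] Submodule.span R {e}) :
    (f ⟨e, Submodule.mem_span_singleton_self e⟩ : R) =
      e * f ⟨e, Submodule.mem_span_singleton_self e⟩ * e := by
  have hself : e • (⟨e, Submodule.mem_span_singleton_self e⟩ : Submodule.span R {e}) =
      ⟨e, Submodule.mem_span_singleton_self e⟩ := Subtype.ext he
  have hleft : (f ⟨e, Submodule.mem_span_singleton_self e⟩ : R) =
      e * f ⟨e, Submodule.mem_span_singleton_self e⟩ := by
    rw [← smul_eq_mul, ← Submodule.coe_smul, ← map_smul, hself]
  obtain ⟨c, hc⟩ := Submodule.mem_span_singleton.mp (f ⟨e, Submodule.mem_span_singleton_self e⟩).2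
  rw [← hleft, ← hc, smul_eq_mul, mul_assoc, he.eq]

end Semiring

namespace Torus

def periodicUpperTriangular : Subalgebra F2 Mat4 where
  carrier := {m | m 1 0 = 0 ∧ m 2 0 = 0 ∧ m 3 0 = 0 ∧ m 2 1 = 0 ∧ m 3 1 = 0 ∧
    m 3 2 = 0 ∧ m 0 0 = m 2 2 ∧ m 1 1 = m 3 3}
  mul_mem' := by
    rintro a b ⟨ha10, ha20, ha30, ha21, ha31, ha32, ha02, ha13⟩
      ⟨hb10, hb20, hb30, hb21, hb31, hb32, hb02, hb13⟩
    simp only [Set.mem_ofPred_eq, Matrix.mul_apply, Fin.sum_univ_four,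
      ha10, ha20, ha30, ha21, ha31, ha32, hb10, hb20, hb30, hb21, hb31, hb32]
    refine ⟨by ring, by ring, by ring, by ring, by ring, by ring, ?_, ?_⟩
    · rw [ha02, hb02]; ring
    · rw [ha13, hb13]; ring
  add_mem' := by
    rintro a b ⟨ha10, ha20, ha30, ha21, ha31, ha32, ha02, ha13⟩
      ⟨hb10, hb20, hb30, hb21, hb31, hb32, hb02, hb13⟩
    simp_all [Matrix.add_apply]
  algebraMap_mem' r := by
    simp [Algebra.algebraMap_eq_smul_one, Matrix.smul_apply]

lemma TA_le_periodicUpperTriangular : TA ≤ periodicUpperTriangular := by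
  refine Algebra.adjoin_le fun m hm => ?_
  simp only [Set.mem_insert_iff, Set.mem_singleton_iff] at hm
  rcases hm with rfl | rfl | rfl | rfl | rfl | rfl | rfl | rfl <;>
    exact ⟨by decide, by decide, by decide, by decide, by decide, by decide, by decide, by decide⟩

lemma i0m_mul_mul_i0m {M : Mat4} (h20 : M 2 0 = 0) (h22 : M 2 2 = M 0 0) :
    i0m * M * i0m = M 0 0 • i0m + M 0 2 • r12m := by
  ext i j
  fin_cases i <;> fin_cases j <;>
    simp [Matrix.mul_apply, i0m, r12m, Matrix.single, h20, h22]

lemma ι₀_mul_mul_ι₀_mem (a : A) : ι₀ * a * ι₀ ∈ ({0, ι₀, ρ₁₂, ι₀ + ρ₁₂} : Set A) := by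
  obtain ⟨-, h20, -, -, -, -, h02, -⟩ := TA_le_periodicUpperTriangular a.2
  have hcorner : ι₀ * a * ι₀ = (a : Mat4) 0 0 • ι₀ + (a : Mat4) 0 2 • ρ₁₂ :=
    Subtype.ext (i0m_mul_mul_i0m h20 h02.symm)
  have hF2 : ∀ u : F2, u = 0 ∨ u = 1 := by decide
  rcases hF2 ((a : Mat4) 0 0) with h0 | h0 <;> rcases hF2 ((a : Mat4) 0 2) with h2 | h2 <;>
    simp [hcorner, h0, h2]

/-- The paper's generator `x` of `P`. -/
def gen : J0 := ⟨ι₀, Submodule.mem_span_singleton_self ι₀⟩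

lemma ι₀_isIdempotentElem : IsIdempotentElem ι₀ := Subtype.ext (by decide)

lemma ι₀_mul_ρ₁₂ : ι₀ * ρ₁₂ = ρ₁₂ := Subtype.ext (by decide)

lemma ρ₁₂_mul_ρ₁₂ : ρ₁₂ * ρ₁₂ = 0 := Subtype.ext (by decide)

lemma two_eq_zero : (2 : A) = 0 := Subtype.ext (by decide)

lemma J0.linearMap_ext {f f' : J0 →ₗ[A] J0} (h : (f gen : A) = f' gen) : f = f' :=
  Submodule.linearMap_ext_span_singleton (Subtype.ext h)

lemma dP_comp_dP : dP ∘ₗ dP = 0 := by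
  refine LinearMap.ext fun z => Subtype.ext ?_
  change z.val * ρ₁₂ * ρ₁₂ = 0
  rw [mul_assoc, ρ₁₂_mul_ρ₁₂, mul_zero]

lemma eq_zero_or_eq_id_or_eq_dP_or_eq_id_add_dP (f : J0 →ₗ[A] J0) :
    f = 0 ∨ f = LinearMap.id ∨ f = dP ∨ f = LinearMap.id + dP := by
  have hf : (f gen : A) ∈ ({0, ι₀, ρ₁₂, ι₀ + ρ₁₂} : Set A) := by
    have hcorner : (f gen : A) = ι₀ * f gen * ι₀ :=
      IsIdempotentElem.apply_self_eq_mul_mul ι₀_isIdempotentElem f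
    exact hcorner ▸ ι₀_mul_mul_ι₀_mem _
  have hdP : (dP gen : A) = ρ₁₂ := ι₀_mul_ρ₁₂
  rcases hf with h | h | h | h
  · exact Or.inl (J0.linearMap_ext h)
  · exact Or.inr (Or.inl (J0.linearMap_ext h))
  · exact Or.inr (Or.inr (Or.inl (J0.linearMap_ext (h.trans hdP.symm))))
  · exact Or.inr (Or.inr (Or.inr (J0.linearMap_ext (h.trans (congrArg (ι₀ + ·) hdP.symm)))))

lemma commute_dP (f : Module.End A J0) : Commute dP f := by
  rcases eq_zero_or_eq_id_or_eq_dP_or_eq_id_add_dP f with rfl | rfl | rfl | rfl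
  · exact Commute.zero_right _
  · exact Commute.one_right _
  · exact Commute.refl _
  · exact (Commute.one_right _).add_right (Commute.refl _)

/-- `∂ ∘ ∂ = 0`; every left `𝒜`-module endomorphism of `P = 𝒜ι₀` is one of
`0`, `id`, `∂`, `id + ∂` and `id`, `∂` are `𝔽₂`-linearly independent (so the
endomorphism space is 2-dimensional over `𝔽₂`, spanned by the identity and
right multiplication by `ρ₁₂`); and the differential `f ↦ ∂∘f + f∘∂` on the
endomorphism space vanishes; hence the homology of the endomorphism complex is
2-dimensional over `𝔽₂`, with basis the classes of `id` and of `∂`. -/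
theorem stmt13 :
    dP ∘ₗ dP = 0 ∧
      (∀ f : J0 →ₗ[A] J0, f = 0 ∨ f = LinearMap.id ∨ f = dP ∨ f = LinearMap.id + dP) ∧
      (LinearMap.id (R := A) (M := J0) ≠ 0 ∧ dP ≠ 0 ∧ LinearMap.id + dP ≠ 0) ∧
      (∀ f : J0 →ₗ[A] J0, dP ∘ₗ f + f ∘ₗ dP = 0) := by
  have ne_zero_of_apply_gen {f : J0 →ₗ[A] J0} (h : ((f gen : A) : Mat4) ≠ 0) : f ≠ 0 := by
    rintro rfl
    exact h rfl
  refine ⟨dP_comp_dP, eq_zero_or_eq_id_or_eq_dP_or_eq_id_add_dP,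
    ⟨ne_zero_of_apply_gen (by decide), ne_zero_of_apply_gen (by decide),
      ne_zero_of_apply_gen (by decide)⟩, fun f => ?_⟩
  have hcomm : dP ∘ₗ f = f ∘ₗ dP := (commute_dP f).eq
  rw [← hcomm]
  exact LinearMap.ext fun z => add_self_eq_zero_of_two_eq_zero two_eq_zero (dP (f z))

end Torus
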